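/- Let α ∈ (0,1). For every s ≥ 0 there exists a unique c ∈ ℝ such that Φ(c+s) − Φ(−c) = 1−α; denote it c(s). Moreover c(0) = z_{1−α/2} and c(s) → z_{1−α} as s → ∞. -/

import Mathlib

/-!
The coverage map `c ↦ Φ(c + s) - Φ(-c)` is continuous and strictly increasing from `-1` to `1`,
so it takes the value `1 - α` exactly once. At `s = 0` the symmetry `Φ(-c) = 1 - Φ(c)` turns the
equation into `Φ(c) = 1 - α/2`. Since `Φ ≤ 1`, the equation forces `c(s) ≥ z_{1-α}`, hence
`Φ(-c(s))` lies between `Φ(z_{1-α} + s) - (1 - α)` and `α = Φ(-z_{1-α})`; both bounds tend to `α`.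
-/

open MeasureTheory ProbabilityTheory

/-- The standard normal cumulative distribution function `Φ`. -/
noncomputable def Phi (x : ℝ) : ℝ := (gaussianReal 0 1 (Set.Iic x)).toReal

open Filter

open Topology Set

theorem StrictMono.tendsto_of_tendsto_comp {α β γ : Type*} [LinearOrder α] [TopologicalSpace α]
    [OrderTopology α] [LinearOrder β] [TopologicalSpace β] [OrderTopology β] {f : α → β}
    (hf : StrictMono f) {g : γ → α} {l : Filter γ} {a : α}
    (h : Tendsto (f ∘ g) l (𝓝 (f a))) : Tendsto g l (𝓝 a) := by
  rw [tendsto_order] at h ⊢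
  exact ⟨fun b hb => (h.1 _ (hf hb)).mono fun _ hx => hf.lt_iff_lt.1 hx,
    fun b hb => (h.2 _ (hf hb)).mono fun _ hx => hf.lt_iff_lt.1 hx⟩

section CoverageEquation

variable {F : ℝ → ℝ}

theorem existsUnique_sub_comp_neg_eq (hmono : StrictMono F) (hcont : Continuous F)
    (htop : Tendsto F atTop (𝓝 1)) (hbot : Tendsto F atBot (𝓝 0)) (s : ℝ) {p : ℝ}
    (hp : p ∈ Ioo (-1) 1) : ∃! c, F (c + s) - F (-c) = p := by
  set G : ℝ → ℝ := fun c => F (c + s) - F (-c)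
  have hG_mono : StrictMono G := fun a b hab =>
    sub_lt_sub (hmono (add_lt_add_left hab s)) (hmono (neg_lt_neg hab))
  have hG_cont : Continuous G := by fun_prop
  have hG_top : Tendsto G atTop (𝓝 (1 - 0)) :=
    (htop.comp (tendsto_atTop_add_const_right _ s tendsto_id)).sub
      (hbot.comp tendsto_neg_atTop_atBot)
  have hG_bot : Tendsto G atBot (𝓝 (0 - 1)) :=
    (hbot.comp (tendsto_atBot_add_const_right _ s tendsto_id)).sub
      (htop.comp tendsto_neg_atBot_atTop)
  obtain ⟨a, ha⟩ := (hG_bot.eventually (eventually_lt_nhds (by linarith [hp.1]))).exists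
  obtain ⟨b, hb⟩ := (hG_top.eventually (eventually_gt_nhds (by linarith [hp.2]))).exists
  obtain ⟨c, hc⟩ := mem_range_of_exists_le_of_exists_ge hG_cont ⟨a, ha.le⟩ ⟨b, hb.le⟩
  exact ⟨c, hc, fun y hy => hG_mono.injective (hy.trans hc.symm)⟩

theorem tendsto_of_sub_comp_neg_eq (hmono : StrictMono F) (htop : Tendsto F atTop (𝓝 1))
    (hsymm : ∀ x, F (-x) = 1 - F x) {z : ℝ} {c : ℝ → ℝ}
    (hc : ∀ᶠ s in atTop, F (c s + s) - F (-c s) = F z) : Tendsto c atTop (𝓝 z) := by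
  have hle_one : ∀ x, F x ≤ 1 := hmono.monotone.ge_of_tendsto htop
  have hz_le : ∀ᶠ s in atTop, z ≤ c s := hc.mono fun s hs => by
    have : F (-c s) ≤ F (-z) := by linarith [hle_one (c s + s), hsymm z]
    linarith [hmono.le_iff_le.1 this]
  have hlower : Tendsto (fun s => F (z + s) - F z) atTop (𝓝 (F (-z))) := by
    rw [hsymm]
    exact (htop.comp (tendsto_atTop_add_const_left _ z tendsto_id)).sub_const _
  have hlower_le : ∀ᶠ s in atTop, F (z + s) - F z ≤ F (-c s) := by
    filter_upwards [hc, hz_le] with s hs hzs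
    linarith [hmono.monotone (add_le_add_left hzs s)]
  have hupper_le : ∀ᶠ s in atTop, F (-c s) ≤ F (-z) :=
    hz_le.mono fun s hzs => hmono.monotone (neg_le_neg hzs)
  have hneg : Tendsto (fun s => -c s) atTop (𝓝 (-z)) :=
    hmono.tendsto_of_tendsto_comp
      (tendsto_of_tendsto_of_tendsto_of_le_of_le' hlower tendsto_const_nhds hlower_le hupper_le)
  simpa using hneg.neg

end CoverageEquation

theorem Phi_eq_cdf : Phi = cdf (gaussianReal 0 1) :=
  funext fun x => (cdf_eq_real (gaussianReal 0 1) x).symm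

theorem Phi_eq_integral (x : ℝ) : Phi x = ∫ t in Iic x, gaussianPDFReal 0 1 t := by
  rw [Phi, gaussianReal_apply_eq_integral 0 one_ne_zero]
  exact ENNReal.toReal_ofReal (integral_nonneg fun t => (gaussianPDFReal_nonneg 0 1 t))

theorem Phi_sub_Phi (a b : ℝ) : Phi b - Phi a = ∫ t in a..b, gaussianPDFReal 0 1 t := by
  rw [Phi_eq_integral, Phi_eq_integral]
  exact intervalIntegral.integral_Iic_sub_Iic (integrable_gaussianPDFReal 0 1).integrableOn
    (integrable_gaussianPDFReal 0 1).integrableOn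

theorem Phi_strictMono : StrictMono Phi := fun a b hab => by
  have : 0 < Phi b - Phi a := by
    rw [Phi_sub_Phi]
    exact intervalIntegral.intervalIntegral_pos_of_pos
      (integrable_gaussianPDFReal 0 1).intervalIntegrable
      (gaussianPDFReal_pos 0 1 · one_ne_zero) hab
  linarith

theorem Phi_continuous : Continuous Phi := by
  have : Phi = fun x => Phi 0 + ∫ t in (0 : ℝ)..x, gaussianPDFReal 0 1 t := by
    funext x
    rw [← Phi_sub_Phi]
    ring
  rw [this]
  exact continuous_const.add (intervalIntegral.continuous_primitive
    (fun _ _ => (integrable_gaussianPDFReal 0 1).intervalIntegrable) 0)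

theorem Phi_neg (x : ℝ) : Phi (-x) = 1 - Phi x := by
  have hIoi : Phi (-x) = ∫ t in Ioi x, gaussianPDFReal 0 1 t := by
    rw [Phi_eq_integral, ← neg_neg x, ← integral_comp_neg_Iic, neg_neg]
    simp [gaussianPDFReal]
  have htotal : Phi x + ∫ t in Ioi x, gaussianPDFReal 0 1 t = 1 := by
    rw [Phi_eq_integral, intervalIntegral.integral_Iic_add_Ioi
      (integrable_gaussianPDFReal 0 1).integrableOn (integrable_gaussianPDFReal 0 1).integrableOn]
    exact integral_gaussianPDFReal_eq_one 0 one_ne_zero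
  linarith

/-- Well-posedness of the Imbens–Manski critical value: for `α ∈ (0,1)` and every `s ≥ 0`
there is a unique `c` with `Φ(c+s) - Φ(-c) = 1-α`; moreover `c(0) = z_{1-α/2}` and
`c(s) → z_{1-α}` as `s → ∞`, where `z_p = Φ⁻¹(p)`. -/
theorem imbens_manski_critical_value (α : ℝ) (hα : α ∈ Set.Ioo (0 : ℝ) 1)
    (z₁ z₂ : ℝ) (hz₁ : Phi z₁ = 1 - α) (hz₂ : Phi z₂ = 1 - α / 2) :
    (∀ s : ℝ, 0 ≤ s → ∃! c : ℝ, Phi (c + s) - Phi (-c) = 1 - α) ∧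
    ∀ cf : ℝ → ℝ,
      (∀ s : ℝ, 0 ≤ s → Phi (cf s + s) - Phi (-cf s) = 1 - α) →
      cf 0 = z₂ ∧ Tendsto cf atTop (nhds z₁) := by
  have htop : Tendsto Phi atTop (𝓝 1) := Phi_eq_cdf ▸ tendsto_cdf_atTop _
  have hbot : Tendsto Phi atBot (𝓝 0) := Phi_eq_cdf ▸ tendsto_cdf_atBot _
  refine ⟨fun s _ => existsUnique_sub_comp_neg_eq Phi_strictMono Phi_continuous htop hbot s
    ⟨by linarith [hα.2], by linarith [hα.1]⟩, fun cf hcf => ⟨?_, ?_⟩⟩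
  · have h0 := hcf 0 le_rfl
    rw [add_zero, Phi_neg] at h0
    exact Phi_strictMono.injective (by linarith)
  · refine tendsto_of_sub_comp_neg_eq Phi_strictMono htop Phi_neg (eventually_atTop.2 ⟨0, ?_⟩)
    simpa only [hz₁] using hcf
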